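/- Sphere-to-plane reduction identity (Lemma of Mouhot-Pareschi) in dimension d: for any continuous integrable F : R^d → R and nonzero w ∈ R^d, (1/2) ∫_{S^{d−1}} F(|w|σ − w) dσ = |w|^{−(d−2)} ∫_{R^d} δ(2x·w + |x|²) F(x) dx, where the right-hand side is the surface integral of F over the sphere {x : |x + w| = |w|} weighted appropriately. In the case d = 2 and F radial, F(|w|σ − w) integrated over the circle equals 2∫ over the circle of center −w and radius |w| of F with weight 1/(2|x+w|) appropriately normalized. -/

import Mathlib

/-!
The map `σ ↦ ‖w‖ • σ - w` is a homothety followed by a translation: it carries the unit sphere onto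
the sphere of centre `-w` and radius `‖w‖` and multiplies `(d-1)`-dimensional Hausdorff measure by
`‖w‖ ^ (d-1)`. On that sphere the density `1 / (2‖x + w‖)` of the Dirac measure is the constant
`1 / (2‖w‖)`, and `‖w‖ ^ (-(d-1)) / 2 = ‖w‖ ^ (-(d-2)) / (2‖w‖)`.
-/

open MeasureTheory Metric

section HausdorffAffine

variable {E : Type*} [NormedAddCommGroup E] [NormedSpace ℝ E] {s c : ℝ}

theorem preimage_smul_sub_sphere (hc : c ≠ 0) (v x : E) (r : ℝ) :
    (fun y => c • y - v) ⁻¹' sphere (c • x - v) (‖c‖ * r) = sphere x r := by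
  ext y
  simp [← smul_sub, norm_smul, hc]

variable [MeasurableSpace E] [BorelSpace E]

theorem map_smul_sub_hausdorffMeasure (hs : 0 ≤ s) (hc : c ≠ 0) (v : E) :
    Measure.map (fun x => c • x - v) μH[s] = ‖c‖₊⁻¹ ^ s • μH[s] := by
  have hsmul : Measure.map (c • · : E → E) μH[s] = ‖c‖₊⁻¹ ^ s • μH[s] := by
    simpa [AffineMap.coe_homothety] using
      map_homothety_hausdorffMeasure (E := E) hs (0 : E) hc
  rw [← Function.comp_def (· - v) (c • ·),
    ← Measure.map_map (measurable_sub_const v) (measurable_const_smul c), hsmul,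
    Measure.map_smul]
  exact congrArg _ ((IsometryEquiv.subRight v).map_hausdorffMeasure s)

theorem setIntegral_comp_smul_sub_hausdorffMeasure {G : Type*} [NormedAddCommGroup G]
    [NormedSpace ℝ G] (hs : 0 ≤ s) (hc : c ≠ 0) (v : E) (f : E → G) (A : Set E) :
    ∫ x in (fun x => c • x - v) ⁻¹' A, f (c • x - v) ∂μH[s] = |c| ^ (-s) • ∫ y in A, f y ∂μH[s] := by
  have hemb : MeasurableEmbedding (fun x : E => c • x - v) :=
    ((Homeomorph.smulOfNeZero c hc).trans (Homeomorph.subRight v)).measurableEmbedding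
  rw [← hemb.setIntegral_map, map_smul_sub_hausdorffMeasure hs hc, Measure.restrict_smul,
    integral_smul_nnreal_measure, NNReal.smul_def, NNReal.coe_rpow, NNReal.coe_inv, coe_nnnorm,
    Real.norm_eq_abs, Real.rpow_neg (abs_nonneg c), Real.inv_rpow (abs_nonneg c)]

end HausdorffAffine

theorem setIntegral_sphere_comp_dist_mul {E : Type*} [MetricSpace E] [MeasurableSpace E]
    [OpensMeasurableSpace E] (μ : Measure E) (g : ℝ → ℝ) (f : E → ℝ) (x : E) (r : ℝ) :
    ∫ y in sphere x r, g (dist y x) * f y ∂μ = g r * ∫ y in sphere x r, f y ∂μ := by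
  rw [← integral_const_mul]
  exact setIntegral_congr_fun isClosed_sphere.measurableSet fun y hy => by rw [mem_sphere.1 hy]

theorem sphere_to_plane_reduction_general (d : ℕ) (hd : 2 ≤ d)
    (w : EuclideanSpace ℝ (Fin d)) (hw : w ≠ 0)
    (F : EuclideanSpace ℝ (Fin d) → ℝ) :
    (1 / 2) * ∫ σ in Metric.sphere (0 : EuclideanSpace ℝ (Fin d)) 1,
        F (‖w‖ • σ - w) ∂μH[(d : ℝ) - 1]
      = ‖w‖ ^ (-((d : ℝ) - 2)) *
        ∫ x in Metric.sphere (-w) ‖w‖,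
          (1 / (2 * ‖x + w‖)) * F x ∂μH[(d : ℝ) - 1] := by
  have hw' : 0 < ‖w‖ := norm_pos_iff.2 hw
  have hs : 0 ≤ (d : ℝ) - 1 := sub_nonneg.2 (by exact_mod_cast (by omega : 1 ≤ d))
  have hsphere : (fun σ => ‖w‖ • σ - w) ⁻¹' sphere (-w) ‖w‖ = sphere 0 1 := by
    simpa using preimage_smul_sub_sphere hw'.ne' w 0 1
  have hchange := setIntegral_comp_smul_sub_hausdorffMeasure hs hw'.ne' w F (sphere (-w) ‖w‖)
  rw [hsphere] at hchange
  have hweight := setIntegral_sphere_comp_dist_mul μH[(d : ℝ) - 1] (fun r => 1 / (2 * r)) F (-w) ‖w‖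
  simp only [dist_eq_norm, sub_neg_eq_add] at hweight
  simp only [hchange, hweight, abs_of_pos hw', smul_eq_mul]
  rw [show -((d : ℝ) - 1) = -((d : ℝ) - 2) + -1 by ring, Real.rpow_add hw', Real.rpow_neg_one]
  field_simp

/-- Sphere-to-plane reduction identity (Lemma of Mouhot–Pareschi):
`(1/2) ∫_{S^{d-1}} F(|w|σ - w) dσ
  = |w|^{-(d-2)} ∫_{sphere(-w,|w|)} F(x)/(2|x+w|) dS(x)`,
where the right-hand side is the surface integral over the sphere
`{x : |x + w| = |w|}` (the Dirac measure `δ(2x·w + |x|²)` has density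
`1/(2|x+w|)` with respect to the surface measure). -/
theorem sphere_to_plane_reduction (d : ℕ) (hd : 2 ≤ d)
    (w : EuclideanSpace ℝ (Fin d)) (hw : w ≠ 0)
    (F : EuclideanSpace ℝ (Fin d) → ℝ) (hF : Continuous F)
    (hInt : IntegrableOn F (Metric.sphere (-w) ‖w‖) μH[(d : ℝ) - 1]) :
    (1 / 2) * ∫ σ in Metric.sphere (0 : EuclideanSpace ℝ (Fin d)) 1,
        F (‖w‖ • σ - w) ∂μH[(d : ℝ) - 1]
      = ‖w‖ ^ (-((d : ℝ) - 2)) *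
        ∫ x in Metric.sphere (-w) ‖w‖,
          (1 / (2 * ‖x + w‖)) * F x ∂μH[(d : ℝ) - 1] :=
  sphere_to_plane_reduction_general d hd w hw F
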